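/- arXiv:2410.23431 — 4 statements merged into one kernel-verified Lean document; each statement's English description precedes it below -/
import Mathlib

section
/- Let M be a nontrivial graph matroid family with rank function r, dimensionality d, and threshold t. Then for every n ≥ t, r(K_n) = d·(n − t) + r(K_t). -/
/-!
Common framework: graph matroid families.

A finite simple graph (without isolated vertices) is identified with its edge
set: a finite set of non-diagonal elements of `Sym2 ℕ`.  A graph matroid
family is encoded, following the paper, as a finitary matroid on the edge set
of the countable complete graph on `ℕ` that is invariant under all
permutations of `ℕ`.
-/

/-- The set of vertices covered by a set of edges. -/
def eSupp (E : Set (Sym2 ℕ)) : Set ℕ := {v : ℕ | ∃ e ∈ E, v ∈ e}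

/-- The edge set of the complete graph on the vertex set `V`. -/
def clique (V : Set ℕ) : Set (Sym2 ℕ) := {e : Sym2 ℕ | ¬ e.IsDiag ∧ ∀ v ∈ e, v ∈ V}

/-- The edge set of the complete graph `K_n` on the vertices `0, …, n-1`. -/
def cliqueN (n : ℕ) : Set (Sym2 ℕ) := clique {v : ℕ | v < n}

/-- `E` is (the edge set of) a finite simple graph. -/
def IsGraph (E : Set (Sym2 ℕ)) : Prop := E.Finite ∧ ∀ e ∈ E, ¬ e.IsDiag

/-- The degree of the vertex `v` in the edge set `E`. -/
noncomputable def deg (E : Set (Sym2 ℕ)) (v : ℕ) : ℕ := {e ∈ E | v ∈ e}.ncard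

/-- The minimum degree of (the graph with) edge set `E` (whose vertex set is `eSupp E`). -/
noncomputable def minDeg (E : Set (Sym2 ℕ)) : ℕ := sInf {k : ℕ | ∃ v ∈ eSupp E, deg E v = k}

/-- Deleting a set `S` of vertices from the graph with edge set `E`. -/
def deleteVerts (E : Set (Sym2 ℕ)) (S : Set ℕ) : Set (Sym2 ℕ) := {e ∈ E | ∀ v ∈ e, v ∉ S}

/-- The graph with edge set `E` is `k`-connected: it has more than `k` vertices and
deleting any set of fewer than `k` vertices leaves a connected graph. -/
def KConnected (k : ℕ) (E : Set (Sym2 ℕ)) : Prop :=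
  k < (eSupp E).ncard ∧
  ∀ S : Finset ℕ, S.card < k →
    ((SimpleGraph.fromEdgeSet E).induce (eSupp E \ ↑S)).Connected

/-- `E` is a forest. -/
def IsForest (E : Set (Sym2 ℕ)) : Prop := (SimpleGraph.fromEdgeSet E).IsAcyclic

/-- `E` is a matching: no two distinct edges of `E` share a vertex. -/
def IsMatching (E : Set (Sym2 ℕ)) : Prop :=
  ∀ e ∈ E, ∀ f ∈ E, e ≠ f → ∀ v : ℕ, v ∈ e → v ∉ f

/-- `E` is a star `K_{1,m}` with `m` edges. -/
def IsStar (m : ℕ) (E : Set (Sym2 ℕ)) : Prop :=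
  ∃ (c : ℕ) (L : Finset ℕ), c ∉ L ∧ L.card = m ∧ E = (fun x => s(c, x)) '' ↑L

/-- `C` is a cycle graph `C_n` for some `n ≥ 3`. -/
def IsCycleGraph (C : Set (Sym2 ℕ)) : Prop :=
  ∃ n : ℕ, 3 ≤ n ∧ ∃ f : ZMod n → ℕ, Function.Injective f ∧
    C = {e : Sym2 ℕ | ∃ i : ZMod n, e = s(f i, f (i + 1))}

/-- The rank of the set `X` in the matroid `M₀`: the supremum of the cardinalities of
independent subsets of `X` (as a natural number; all sets we use are finite). -/
noncomputable def mrk (M₀ : Matroid (Sym2 ℕ)) (X : Set (Sym2 ℕ)) : ℕ :=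
  sSup {n : ℕ | ∃ I ⊆ X, M₀.Indep I ∧ I.ncard = n}

/-- A vertical `k`-separation of the matroid `M₀`. -/
def VerticalSep (M₀ : Matroid (Sym2 ℕ)) (k : ℕ) (E₁ E₂ : Set (Sym2 ℕ)) : Prop :=
  Disjoint E₁ E₂ ∧ E₁ ∪ E₂ = M₀.E ∧
  k ≤ mrk M₀ E₁ ∧ k ≤ mrk M₀ E₂ ∧
  mrk M₀ E₁ + mrk M₀ E₂ + 1 ≤ mrk M₀ M₀.E + k

/-- The matroid `M₀` is vertically `k`-connected. -/
def VerticallyConnected (M₀ : Matroid (Sym2 ℕ)) (k : ℕ) : Prop :=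
  k ≤ mrk M₀ M₀.E ∧
  ∀ k' : ℕ, 0 < k' → k' < k → ∀ E₁ E₂ : Set (Sym2 ℕ), ¬ VerticalSep M₀ k' E₁ E₂

/-- A `d`-dimensional abstract rigidity matroid on the complete graph with vertex set `V`. -/
def IsARM (d : ℕ) (V : Set ℕ) (M₀ : Matroid (Sym2 ℕ)) : Prop :=
  M₀.E = clique V ∧
  (∀ E₁ E₂ : Set (Sym2 ℕ), E₁ ⊆ clique V → E₂ ⊆ clique V →
      (eSupp E₁ ∩ eSupp E₂).ncard < d →
      M₀.closure (E₁ ∪ E₂) = M₀.closure E₁ ∪ M₀.closure E₂) ∧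
  (∀ E₁ E₂ : Set (Sym2 ℕ), E₁ ⊆ clique V → E₂ ⊆ clique V →
      d ≤ (eSupp E₁ ∩ eSupp E₂).ncard →
      M₀.closure E₁ = clique (eSupp E₁) → M₀.closure E₂ = clique (eSupp E₂) →
      M₀.closure (E₁ ∪ E₂) = clique (eSupp E₁ ∪ eSupp E₂))

/-- The `d`-dimensional edge split operation: replace an edge `uv` of `G` by a new
vertex `w` joined to `u` and `v`, as well as to `d - 1` other vertices of `G`. -/
def EdgeSplit (d : ℕ) (G G' : Set (Sym2 ℕ)) : Prop :=
  ∃ (u v w : ℕ) (X : Finset ℕ),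
    s(u, v) ∈ G ∧ w ∉ eSupp G ∧ ↑X ⊆ eSupp G ∧ X.card = d - 1 ∧ u ∉ X ∧ v ∉ X ∧
    G' = (G \ {s(u, v)}) ∪ {s(w, u), s(w, v)} ∪ ((fun x => s(w, x)) '' ↑X)

/-- A graph matroid family: a finitary matroid on the edge set of the countable
complete graph on `ℕ`, invariant under all permutations of `ℕ`. -/
structure GraphMatroidFamily where
  /-- The underlying matroid on the edge set of `K_ℕ`. -/
  M : Matroid (Sym2 ℕ)
  ground_eq : M.E = {e : Sym2 ℕ | ¬ e.IsDiag}
  finitary : M.Finitary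
  invariant : ∀ σ : Equiv.Perm ℕ, ∀ I : Set (Sym2 ℕ),
    M.Indep I → M.Indep (Sym2.map σ '' I)

namespace GraphMatroidFamily

variable (M : GraphMatroidFamily)

/-- The rank function of the family: `M.rk E` is the rank of the matroid `M(G)` for
any graph `G` whose edge set contains `E`. -/
noncomputable def rk (E : Set (Sym2 ℕ)) : ℕ := mrk M.M E

/-- A set of edges (a graph) is `M`-independent. -/
def Indep (E : Set (Sym2 ℕ)) : Prop := M.M.Indep E

/-- `C` is an `M`-circuit: a graph that is not `M`-independent, but such that deleting
any single edge from it yields an `M`-independent graph. -/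
def IsCircuit (C : Set (Sym2 ℕ)) : Prop :=
  IsGraph C ∧ ¬ M.Indep C ∧ ∀ e ∈ C, M.Indep (C \ {e})

/-- The graph with edge set `E` is `M`-rigid. -/
def Rigid (E : Set (Sym2 ℕ)) : Prop := M.rk E = M.rk (clique (eSupp E))

/-- The graph with vertex set `V` and edge set `E` is `M`-rigid. -/
def RigidOn (V : Set ℕ) (E : Set (Sym2 ℕ)) : Prop := M.rk E = M.rk (clique V)

/-- `M` is trivial if every (finite, simple) graph is `M`-independent. -/
def Trivial : Prop := ∀ E : Set (Sym2 ℕ), IsGraph E → M.Indep E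

/-- `M` is unbounded: the sequence `r(K_n)` is unbounded. -/
def Unbounded : Prop := ∀ B : ℕ, ∃ n : ℕ, B < M.rk (cliqueN n)

/-- `M` is bounded: the sequence `r(K_n)` is bounded. -/
def Bounded : Prop := ∃ B : ℕ, ∀ n : ℕ, M.rk (cliqueN n) ≤ B

/-- For a bounded family, `m` is the rank `r(M)` of `M`: the maximum (limit) of the
monotone sequence `r(K_n)`. -/
def HasRank (m : ℕ) : Prop :=
  (∀ n : ℕ, M.rk (cliqueN n) ≤ m) ∧ ∃ n : ℕ, M.rk (cliqueN n) = m

/-- `d` is the dimensionality of (the nontrivial family) `M`: the least `d` such that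
there is an `M`-circuit with minimum degree `d + 1`. -/
def IsDimensionality (d : ℕ) : Prop :=
  IsLeast {d : ℕ | ∃ C, M.IsCircuit C ∧ minDeg C = d + 1} d

/-- `t` is the threshold of (the nontrivial family) `M` with dimensionality `d`:
the least value of `|V(C)| - 1` over all `M`-circuits `C` with minimum degree `d + 1`. -/
def IsThreshold (d t : ℕ) : Prop :=
  IsLeast {t : ℕ | ∃ C, M.IsCircuit C ∧ minDeg C = d + 1 ∧ (eSupp C).ncard = t + 1} t

/-- `M` has the Lovász–Yemini property. -/
def LovaszYemini : Prop :=
  ∃ c : ℕ, ∀ E : Set (Sym2 ℕ), IsGraph E → KConnected c E → M.Rigid E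

/-- `ψ` is an isomorphism between the matroids `M(G)` and `M(H)`. -/
def MatroidIso (G H : Set (Sym2 ℕ)) (ψ : Sym2 ℕ → Sym2 ℕ) : Prop :=
  Set.BijOn ψ G H ∧ ∀ S ⊆ G, (M.Indep S ↔ M.Indep (ψ '' S))

/-- `G` is `M`-reconstructible: every isomorphism between `M(G)` and `M(H)` (for a graph
`H` without isolated vertices) is induced by a graph isomorphism. -/
def Reconstructible (G : Set (Sym2 ℕ)) : Prop :=
  ∀ H : Set (Sym2 ℕ), IsGraph H → ∀ ψ : Sym2 ℕ → Sym2 ℕ, M.MatroidIso G H ψ →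
    ∃ φ : ℕ → ℕ, Set.BijOn φ (eSupp G) (eSupp H) ∧ ∀ e ∈ G, ψ e = Sym2.map φ e

/-- `M` has the Whitney property. -/
def Whitney : Prop :=
  ∃ c : ℕ, ∀ E : Set (Sym2 ℕ), IsGraph E → KConnected c E → M.Reconstructible E

/-- `M` is the union of the graph matroid families `Ms`. -/
def IsUnionOf {k : ℕ} (Ms : Fin k → GraphMatroidFamily) : Prop :=
  ∀ I : Set (Sym2 ℕ),
    M.Indep I ↔ ∃ Is : Fin k → Set (Sym2 ℕ), (∀ i, (Ms i).Indep (Is i)) ∧ I = ⋃ i, Is i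

/-- `M` is a family of `d`-dimensional abstract rigidity matroids. -/
def FamilyOfARM (d : ℕ) : Prop :=
  ∀ n : ℕ, d ≤ n → IsARM d {v : ℕ | v < n} (M.M.restrict (cliqueN n))

/-- `M` is `1`-extendable: its dimensionality `d` is finite and positive, and the
`d`-dimensional edge split operation preserves `M`-independence. -/
def OneExtendable : Prop :=
  ∃ d : ℕ, 0 < d ∧ M.IsDimensionality d ∧
    ∀ G G' : Set (Sym2 ℕ), IsGraph G → M.Indep G → EdgeSplit d G G' → M.Indep G'

/-- `G` is `k`-vertex-redundantly `M`-rigid. -/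
def VertexRedundantlyRigid (k : ℕ) (G : Set (Sym2 ℕ)) : Prop :=
  M.Rigid G ∧ ∀ S : Finset ℕ, ↑S ⊆ eSupp G → S.card ≤ k →
    M.RigidOn (eSupp G \ ↑S) (deleteVerts G ↑S)

end GraphMatroidFamily

/-!
Let `X` be `K_n` together with `d` edges from the new vertex `n` to `K_n`. A basis of `K_n`
stays independent when these `d` edges are added: a circuit inside would contain `n` with
degree at most `d`, whereas every circuit has minimum degree at least `d + 1` by the definition
of the dimensionality. Conversely, let `n ≥ t` and take a threshold circuit `C`. A permutation
of `ℕ` sends a vertex of degree `d + 1` of `C` to `n`, its neighbours onto the `d` chosen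
vertices and one further vertex `x` of `K_n`, and the remaining `t - d - 1` vertices into
`K_n`. The image of `C` is a circuit all of whose edges except `nx` lie in `X`, so `nx` is in
the closure of `X`. Hence `r(K_{n+1}) = r(K_n) + d` for `n ≥ t`, and the formula follows by
induction.
-/

open Set

theorem Set.Finite.exists_injOn_mapsTo_bijOn {α β : Type*} [Nonempty β] {A B : Set α}
    {A' B' : Set β} (hB : B.Finite) (hAB : A ⊆ B) (hAB' : A' ⊆ B') (hA : A.encard = A'.encard)
    (hle : B.encard ≤ B'.encard) :
    ∃ f : α → β, InjOn f B ∧ MapsTo f B B' ∧ BijOn f A A' := by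
  classical
  have hAfin : A.Finite := hB.subset hAB
  obtain ⟨f₁, hf₁⟩ := hAfin.exists_bijOn_of_encard_eq hA
  have hle' : (B \ A).encard ≤ (B' \ A').encard := by
    rwa [← ENat.add_le_add_iff_right hAfin.encard_lt_top.ne,
      encard_sdiff_add_encard_of_subset hAB, hA, encard_sdiff_add_encard_of_subset hAB']
  obtain ⟨f₂, hf₂, hf₂inj⟩ := hB.sdiff.exists_injOn_of_encard_le hle'
  have hf₁' : BijOn (A.piecewise f₁ f₂) A A' := hf₁.congr (A.piecewise_eqOn f₁ f₂).symm
  have hf₂' : EqOn (A.piecewise f₁ f₂) f₂ (B \ A) := fun x hx =>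
    piecewise_eq_of_notMem _ _ _ hx.2
  refine ⟨A.piecewise f₁ f₂, ?_, ?_, hf₁'⟩
  · rw [← union_sdiff_cancel hAB, injOn_union disjoint_sdiff_right]
    refine ⟨hf₁'.injOn, hf₂inj.congr hf₂'.symm, fun x hx y hy hxy => ?_⟩
    rw [hf₂' hy] at hxy
    exact (hf₂ hy).2 (hxy ▸ hf₁'.mapsTo hx)
  · intro x hx
    by_cases hxA : x ∈ A
    · exact hAB' (hf₁'.mapsTo hxA)
    · exact hf₂' ⟨hx, hxA⟩ ▸ (hf₂ ⟨hx, hxA⟩).1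

theorem Set.Finite.exists_perm_eqOn {α : Type*} [Infinite α] {s : Set α} {f : α → α}
    (hs : s.Finite) (hf : InjOn f s) : ∃ σ : Equiv.Perm α, EqOn σ f s := by
  obtain ⟨σ, hσ⟩ := Cardinal.extend_function_of_lt ⟨s.domRestrict f, hf.injective⟩
    (hs.lt_aleph0.trans_le (Cardinal.aleph0_le_mk α)) ⟨Equiv.refl α⟩
  exact ⟨σ, fun x hx => hσ ⟨x, hx⟩⟩

theorem Set.Finite.exists_perm_bijOn_mapsTo {α : Type*} [Infinite α] {A B A' B' : Set α}
    {u w : α} (hB : B.Finite) (hu : u ∉ B) (hw : w ∉ B') (hAB : A ⊆ B) (hAB' : A' ⊆ B')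
    (hA : A.encard = A'.encard) (hle : B.encard ≤ B'.encard) :
    ∃ σ : Equiv.Perm α, σ u = w ∧ BijOn σ A A' ∧ MapsTo σ B B' := by
  classical
  obtain ⟨f, hinj, hmaps, hbij⟩ := hB.exists_injOn_mapsTo_bijOn hAB hAB' hA hle
  have hfg : EqOn (Function.update f u w) f B := fun x hx =>
    Function.update_of_ne (ne_of_mem_of_not_mem hx hu) _ _
  have hg : InjOn (Function.update f u w) (insert u B) := by
    rw [injOn_insert hu, hfg.image_eq, Function.update_self]
    exact ⟨hinj.congr hfg.symm, fun h => hw (hmaps.image_subset h)⟩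
  obtain ⟨σ, hσ⟩ := (hB.insert u).exists_perm_eqOn hg
  have hσf : EqOn σ f B := (hσ.mono (subset_insert u B)).trans hfg
  exact ⟨σ, (hσ (mem_insert u B)).trans (Function.update_self ..),
    hbij.congr (hσf.mono hAB).symm, hmaps.congr hσf.symm⟩

theorem Sym2.pair_injective {α : Type*} (a : α) : Function.Injective fun b => s(a, b) :=
  fun _ _ => Sym2.congr_right.mp

theorem eSupp_finite {E : Set (Sym2 ℕ)} (hE : E.Finite) : (eSupp E).Finite := by
  refine (hE.biUnion (t := fun e => {v : ℕ | v ∈ e}) fun e _ => ?_).subset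
    fun v ⟨e, he, hv⟩ => mem_biUnion he hv
  induction e using Sym2.ind with
  | _ a b => exact (toFinite {a, b}).subset fun v hv => by simpa [Sym2.mem_iff] using hv

theorem clique_finite {V : Set ℕ} (hV : V.Finite) : (clique V).Finite :=
  ((hV.prod hV).image _).subset fun e he => by
    rw [← sym2_eq_mk_image, mem_sym2_iff_subset]
    exact fun v hv => he.2 v hv

theorem cliqueN_succ (n : ℕ) : cliqueN (n + 1) = clique (insert n (Iio n)) := by
  rw [cliqueN, Iio_insert]
  congr 1
  ext v
  exact Nat.lt_succ_iff

theorem clique_mono {V W : Set ℕ} (h : V ⊆ W) : clique V ⊆ clique W :=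
  fun _ he => ⟨he.1, fun v hv => h (he.2 v hv)⟩

theorem minDeg_le_deg {E : Set (Sym2 ℕ)} {v : ℕ} (hv : v ∈ eSupp E) : minDeg E ≤ deg E v :=
  Nat.sInf_le ⟨v, hv, rfl⟩

theorem exists_deg_eq_minDeg {E : Set (Sym2 ℕ)} (h : (eSupp E).Nonempty) :
    ∃ v ∈ eSupp E, deg E v = minDeg E :=
  Nat.sInf_mem (h.image (deg E))

theorem deg_pos {E : Set (Sym2 ℕ)} (hE : E.Finite) {v : ℕ} (hv : v ∈ eSupp E) :
    0 < deg E v := by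
  obtain ⟨e, he, hve⟩ := hv
  exact (ncard_pos (hE.subset (sep_subset _ _))).mpr ⟨e, he, hve⟩

def starEdges (w : ℕ) (D : Set ℕ) : Set (Sym2 ℕ) := (fun x => s(w, x)) '' D

theorem encard_starEdges (w : ℕ) (D : Set ℕ) : (starEdges w D).encard = D.encard :=
  (Sym2.pair_injective w).encard_image D

theorem starEdges_subset_clique_insert {w : ℕ} {V D : Set ℕ} (hw : w ∉ V) (hDV : D ⊆ V) :
    starEdges w D ⊆ clique (insert w V) := by
  rintro _ ⟨x, hx, rfl⟩
  refine ⟨fun h => hw (Sym2.mk_isDiag_iff.mp h ▸ hDV hx), fun v hv => ?_⟩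
  rcases Sym2.mem_iff.mp hv with rfl | rfl
  exacts [mem_insert v V, mem_insert_of_mem w (hDV hx)]

def nbhd (E : Set (Sym2 ℕ)) (u : ℕ) : Set ℕ := {x | s(u, x) ∈ E}

theorem deg_eq_ncard_nbhd (E : Set (Sym2 ℕ)) (u : ℕ) : deg E u = (nbhd E u).ncard := by
  have h : {e ∈ E | u ∈ e} = starEdges u (nbhd E u) := by
    ext e
    constructor
    · rintro ⟨he, hue⟩
      obtain ⟨x, rfl⟩ := Sym2.mem_iff_exists.mp hue
      exact ⟨x, he, rfl⟩
    · rintro ⟨x, hx, rfl⟩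
      exact ⟨hx, Sym2.mem_mk_left u x⟩
  rw [deg, h, starEdges, ncard_image_of_injective _ (Sym2.pair_injective u)]

theorem nbhd_subset_eSupp_sdiff {E : Set (Sym2 ℕ)} (hE : ∀ e ∈ E, ¬ e.IsDiag) (u : ℕ) :
    nbhd E u ⊆ eSupp E \ {u} := fun x hx =>
  ⟨⟨_, hx, Sym2.mem_mk_right u x⟩, fun h => hE _ hx (Sym2.mk_isDiag_iff.mpr (h ▸ rfl))⟩

theorem deg_lt_ncard_eSupp {E : Set (Sym2 ℕ)} (hE : IsGraph E) {u : ℕ} (hu : u ∈ eSupp E) :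
    deg E u < (eSupp E).ncard := by
  have hfin := eSupp_finite hE.1
  rw [deg_eq_ncard_nbhd]
  exact (ncard_le_ncard (nbhd_subset_eSupp_sdiff hE.2 u) hfin.sdiff).trans_lt
    (ncard_sdiff_singleton_lt_of_mem hu hfin)

theorem mrk_eq_eRk {M₀ : Matroid (Sym2 ℕ)} {X : Set (Sym2 ℕ)} (hX : M₀.IsRkFinite X) :
    (mrk M₀ X : ℕ∞) = M₀.eRk X := by
  obtain ⟨I, hI, hIfin⟩ := hX.exists_finite_isBasis'
  have hmax : IsGreatest {n | ∃ J ⊆ X, M₀.Indep J ∧ J.ncard = n} I.ncard := by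
    refine ⟨⟨I, hI.subset, hI.indep, rfl⟩, ?_⟩
    rintro _ ⟨J, hJX, hJ, rfl⟩
    rw [← ENat.natCast_le_natCast, (hX.finite_of_indep_subset hJ hJX).cast_ncard_eq,
      hIfin.cast_ncard_eq, hI.encard_eq_eRk]
    exact hJ.encard_le_eRk_of_subset hJX
  rw [mrk, hmax.csSup_eq, hIfin.cast_ncard_eq, hI.encard_eq_eRk]

namespace GraphMatroidFamily

instance (M : GraphMatroidFamily) : M.M.Finitary := M.finitary

variable {M : GraphMatroidFamily}


theorem mem_ground_iff {e : Sym2 ℕ} : e ∈ M.M.E ↔ ¬ e.IsDiag := by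
  rw [M.ground_eq]; rfl

theorem clique_subset_ground (V : Set ℕ) : clique V ⊆ M.M.E :=
  fun _ he => mem_ground_iff.mpr he.1

theorem indep_image_perm_iff (σ : Equiv.Perm ℕ) {I : Set (Sym2 ℕ)} :
    M.M.Indep (Sym2.map σ '' I) ↔ M.M.Indep I := by
  refine ⟨fun h => ?_, M.invariant σ I⟩
  simpa [image_image, Sym2.map_map, Function.comp_def] using M.invariant σ⁻¹ _ h

theorem isCircuit_iff {C : Set (Sym2 ℕ)} : M.IsCircuit C ↔ M.M.IsCircuit C := by
  refine ⟨fun ⟨⟨_, hC⟩, hdep, hmin⟩ => ?_, fun hC => ?_⟩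
  · exact Matroid.isCircuit_iff_dep_forall_sdiff_singleton_indep.mpr
      ⟨⟨hdep, fun e he => mem_ground_iff.mpr (hC e he)⟩, hmin⟩
  · exact ⟨⟨hC.finite, fun e he => mem_ground_iff.mp (hC.subset_ground he)⟩, hC.not_indep,
      fun e he => hC.sdiff_singleton_indep he⟩

theorem isCircuit_image_perm {C : Set (Sym2 ℕ)} (hC : M.M.IsCircuit C) (σ : Equiv.Perm ℕ) :
    M.M.IsCircuit (Sym2.map σ '' C) := by
  rw [Matroid.isCircuit_iff_dep_forall_sdiff_singleton_indep] at hC ⊢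
  obtain ⟨hdep, hmin⟩ := hC
  refine ⟨⟨fun h => hdep.not_indep ((indep_image_perm_iff σ).mp h), ?_⟩, ?_⟩
  · rintro _ ⟨e, he, rfl⟩
    exact mem_ground_iff.mpr
      ((Sym2.isDiag_map σ.injective).not.mpr (mem_ground_iff.mp (hdep.subset_ground he)))
  · rintro _ ⟨e, he, rfl⟩
    rw [← image_singleton, ← image_sdiff (Sym2.map.injective σ.injective)]
    exact M.invariant σ _ (hmin e he)

theorem IsDimensionality.succ_le_deg {d : ℕ} (hd : M.IsDimensionality d) {C : Set (Sym2 ℕ)}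
    (hC : M.M.IsCircuit C) {v : ℕ} (hv : v ∈ eSupp C) : d + 1 ≤ deg C v := by
  obtain ⟨v', hv', hdeg⟩ := exists_deg_eq_minDeg ⟨v, hv⟩
  have hpos := deg_pos hC.finite hv'
  have hd' : d ≤ minDeg C - 1 := hd.2 ⟨C, isCircuit_iff.mpr hC, by omega⟩
  have := minDeg_le_deg hv
  omega

theorem IsDimensionality.indep_union_starEdges {d : ℕ} (hd : M.IsDimensionality d)
    {I : Set (Sym2 ℕ)} {V D : Set ℕ} {w : ℕ} (hI : M.M.Indep I) (hIV : I ⊆ clique V)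
    (hw : w ∉ V) (hDV : D ⊆ V) (hD : D.encard ≤ d) :
    M.M.Indep (I ∪ starEdges w D) := by
  by_contra hdep
  have hS : starEdges w D ⊆ M.M.E :=
    (starEdges_subset_clique_insert hw hDV).trans (clique_subset_ground _)
  obtain ⟨C, hCsub, hC⟩ := ((Matroid.not_indep_iff
    (union_subset (hIV.trans (clique_subset_ground V)) hS)).mp hdep).exists_isCircuit_subset
  obtain ⟨e, heC, heI⟩ := not_subset.mp fun hCI => hC.dep.not_indep (hI.subset hCI)
  obtain ⟨x, -, rfl⟩ := (hCsub heC).resolve_left heI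
  have hwC : {f ∈ C | w ∈ f} ⊆ starEdges w D := fun f ⟨hfC, hwf⟩ =>
    (hCsub hfC).resolve_left fun hfI => hw ((hIV hfI).2 w hwf)
  have hdeg : (deg C w : ℕ∞) ≤ d := by
    rw [deg, (hC.finite.subset (sep_subset _ _)).cast_ncard_eq]
    exact (encard_le_encard hwC).trans ((encard_starEdges w D).trans_le hD)
  have := hd.succ_le_deg hC ⟨_, heC, Sym2.mem_mk_left w x⟩
  norm_cast at hdeg
  omega

theorem IsDimensionality.eRk_clique_add_le {d : ℕ} (hd : M.IsDimensionality d) {V D : Set ℕ}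
    {w : ℕ} (hw : w ∉ V) (hDV : D ⊆ V) (hD : D.encard = d) :
    M.M.eRk (clique V) + d ≤ M.M.eRk (clique (insert w V)) := by
  obtain ⟨I, hI⟩ := M.M.exists_isBasis' (clique V)
  have hdisj : Disjoint I (starEdges w D) := disjoint_left.mpr fun e heI ⟨x, _, hx⟩ =>
    hw ((hI.subset heI).2 w (hx ▸ Sym2.mem_mk_left w x))
  have hsub : I ∪ starEdges w D ⊆ clique (insert w V) :=
    union_subset (hI.subset.trans (clique_mono (subset_insert w V)))
      (starEdges_subset_clique_insert hw hDV)
  calc M.M.eRk (clique V) + d = (I ∪ starEdges w D).encard := by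
        rw [encard_union_eq hdisj, encard_starEdges, hD, hI.encard_eq_eRk]
    _ ≤ _ := (hd.indep_union_starEdges hI.indep hI.subset hw hDV hD.le).encard_le_eRk_of_subset
          hsub

theorem image_perm_mem_closure_of_isCircuit {C X : Set (Sym2 ℕ)} (hC : M.M.IsCircuit C)
    {e : Sym2 ℕ} (he : e ∈ C) (σ : Equiv.Perm ℕ)
    (hCX : Sym2.map σ '' C ⊆ insert (Sym2.map σ e) X) : Sym2.map σ e ∈ M.M.closure X :=
  M.M.closure_subset_closure (by rwa [sdiff_subset_iff, ← insert_eq])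
    ((isCircuit_image_perm hC σ).mem_closure_sdiff_singleton_of_mem (mem_image_of_mem _ he))

theorem mem_closure_clique_union_starEdges {C : Set (Sym2 ℕ)} (hC : M.M.IsCircuit C)
    {u w x : ℕ} {V D : Set ℕ} (hu : u ∈ eSupp C) (hw : w ∉ V) (hDV : D ⊆ V)
    (hx : x ∈ V \ D) (hN : (nbhd C u).encard = D.encard + 1)
    (hCV : (eSupp C).encard ≤ V.encard + 1) :
    s(w, x) ∈ M.M.closure (clique V ∪ starEdges w D) := by
  have hnd : ∀ e ∈ C, ¬ e.IsDiag := fun e he => mem_ground_iff.mp (hC.subset_ground he)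
  have hle : (eSupp C \ {u}).encard ≤ V.encard := by
    rwa [← ENat.add_le_add_iff_right ENat.one_ne_top, encard_sdiff_singleton_add_one hu]
  obtain ⟨σ, hσu, hbij, hmaps⟩ := (eSupp_finite hC.finite).sdiff.exists_perm_bijOn_mapsTo
    (notMem_sdiff_of_mem (mem_singleton u)) hw (nbhd_subset_eSupp_sdiff hnd u)
    (insert_subset hx.1 hDV) (by rw [hN, encard_insert_of_notMem hx.2]) hle
  obtain ⟨y, hy, hσy⟩ := hbij.surjOn (mem_insert x D)
  have hσe : Sym2.map σ s(u, y) = s(w, x) := by rw [Sym2.map_mk, hσu, hσy]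
  rw [← hσe]
  refine image_perm_mem_closure_of_isCircuit hC hy σ ?_
  rintro _ ⟨e, he, rfl⟩
  by_cases hue : u ∈ e
  · obtain ⟨b, rfl⟩ := Sym2.mem_iff_exists.mp hue
    change s(σ u, σ b) ∈ _
    rw [hσu, hσe]
    rcases hbij.mapsTo (show b ∈ nbhd C u from he) with hb | hb
    · exact Or.inl (by rw [hb])
    · exact Or.inr (Or.inr ⟨σ b, hb, rfl⟩)
  · refine Or.inr (Or.inl ⟨(Sym2.isDiag_map σ.injective).not.mpr (hnd e he), fun v hv => ?_⟩)
    obtain ⟨a, hae, rfl⟩ := Sym2.mem_map.mp hv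
    exact hmaps ⟨⟨e, he, hae⟩, fun h => hue ((mem_singleton_iff.mp h) ▸ hae)⟩

theorem eRk_clique_insert_le {C : Set (Sym2 ℕ)} (hC : M.M.IsCircuit C) {u w : ℕ}
    {V D : Set ℕ} (hu : u ∈ eSupp C) (hw : w ∉ V) (hDV : D ⊆ V)
    (hN : (nbhd C u).encard = D.encard + 1) (hCV : (eSupp C).encard ≤ V.encard + 1) :
    M.M.eRk (clique (insert w V)) ≤ M.M.eRk (clique V) + D.encard := by
  set X := clique V ∪ starEdges w D
  have hXE : X ⊆ M.M.E := union_subset (clique_subset_ground V)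
    ((starEdges_subset_clique_insert hw hDV).trans (clique_subset_ground _))
  have hspan : clique (insert w V) ⊆ M.M.closure X := by
    intro e he
    by_cases hwe : w ∈ e
    · obtain ⟨x, rfl⟩ := Sym2.mem_iff_exists.mp hwe
      have hxV : x ∈ V := (he.2 x (Sym2.mem_mk_right w x)).resolve_left
        fun h => he.1 (Sym2.mk_isDiag_iff.mpr h.symm)
      by_cases hxD : x ∈ D
      · exact M.M.subset_closure X hXE (Or.inr ⟨x, hxD, rfl⟩)
      · exact mem_closure_clique_union_starEdges hC hu hw hDV ⟨hxV, hxD⟩ hN hCV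
    · refine M.M.subset_closure X hXE (Or.inl ⟨he.1, fun v hv => ?_⟩)
      exact (he.2 v hv).resolve_left fun h => hwe (h ▸ hv)
  calc M.M.eRk (clique (insert w V)) ≤ M.M.eRk X := by
        rw [← M.M.eRk_closure_eq X]; exact M.M.eRk_mono hspan
    _ ≤ M.M.eRk (clique V) + M.M.eRk (starEdges w D) := M.M.eRk_union_le_eRk_add_eRk _ _
    _ ≤ _ := by
        gcongr
        exact (M.M.eRk_le_encard _).trans (encard_starEdges w D).le

theorem rk_cliqueN_eq_eRk (n : ℕ) : (M.rk (cliqueN n) : ℕ∞) = M.M.eRk (cliqueN n) :=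
  mrk_eq_eRk (M.M.isRkFinite_of_finite (clique_finite (finite_Iio n)))

theorem rk_cliqueN_succ {d t n : ℕ} (hd : M.IsDimensionality d) (ht : M.IsThreshold d t)
    (htn : t ≤ n) : M.rk (cliqueN (n + 1)) = M.rk (cliqueN n) + d := by
  obtain ⟨C, hC, hmin, hsupp⟩ := ht.1
  have hfin := eSupp_finite hC.1.1
  obtain ⟨u, hu, hdeg⟩ :=
    exists_deg_eq_minDeg (nonempty_of_ncard_ne_zero (s := eSupp C) (by omega))
  have hdt : d + 1 ≤ t := by
    have := deg_lt_ncard_eSupp hC.1 hu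
    omega
  have hD : (Iio d).encard = d := by rw [← (finite_Iio d).cast_ncard_eq, ncard_Iio_nat]
  have hN : (nbhd C u).encard = (Iio d).encard + 1 := by
    rw [← (hfin.sdiff.subset (nbhd_subset_eSupp_sdiff hC.1.2 u)).cast_ncard_eq,
      ← deg_eq_ncard_nbhd, hdeg, hmin, hD, Nat.cast_succ]
  have hCV : (eSupp C).encard ≤ (Iio n).encard + 1 := by
    rw [← hfin.cast_ncard_eq, hsupp, ← (finite_Iio n).cast_ncard_eq, ncard_Iio_nat]
    exact_mod_cast Nat.succ_le_succ htn
  have hDV : Iio d ⊆ Iio n := Iio_subset_Iio (by omega)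
  have heRk : M.M.eRk (cliqueN (n + 1)) = M.M.eRk (cliqueN n) + d := by
    rw [cliqueN_succ]
    refine le_antisymm ?_ (hd.eRk_clique_add_le (lt_irrefl n) hDV hD)
    exact hD ▸ eRk_clique_insert_le (isCircuit_iff.mp hC) hu (lt_irrefl n) hDV hN hCV
  rw [← Nat.cast_inj (R := ℕ∞), Nat.cast_add, rk_cliqueN_eq_eRk, rk_cliqueN_eq_eRk, heRk]

end GraphMatroidFamily

theorem rank_linear_general (M : GraphMatroidFamily) (d t : ℕ)
    (hd : M.IsDimensionality d) (ht : M.IsThreshold d t) :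
    ∀ n : ℕ, t ≤ n → M.rk (cliqueN n) = d * (n - t) + M.rk (cliqueN t) := by
  intro n hn
  induction n, hn using Nat.le_induction with
  | base => simp
  | succ n hn ih =>
    rw [M.rk_cliqueN_succ hd ht hn, ih, Nat.sub_add_comm hn]
    ring

/-- (Linearity of rank.) If `M` is a nontrivial graph matroid family
with rank function `r`, dimensionality `d`, and threshold `t`, then
`r(K_n) = d (n - t) + r(K_t)` for every `n ≥ t`. -/
theorem rank_linear (M : GraphMatroidFamily) (d t : ℕ)
    (hnt : ¬ M.Trivial) (hd : M.IsDimensionality d) (ht : M.IsThreshold d t) :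
    ∀ n : ℕ, t ≤ n → M.rk (cliqueN n) = d * (n - t) + M.rk (cliqueN t) :=
  rank_linear_general M d t hd ht
end

section
/- Let M be a nontrivial graph matroid family with dimensionality d. If G is a graph and v ∈ V(G) is a vertex with degree at most d in G, then every edge of G incident to v is a bridge (coloop) of the matroid M(G). In particular, the addition of a vertex of degree at most d to a graph preserves M-independence. -/
/-- Key lemma: every `M`-circuit has minimum degree at least `d + 1`, hence no
`M`-circuit can contain an edge incident to a vertex of degree at most `d`. -/
theorem bridge_lemma (M : GraphMatroidFamily) (d : ℕ)
    (hd : M.IsDimensionality d) :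
    ∀ G : Set (Sym2 ℕ), IsGraph G → ∀ v : ℕ, deg G v ≤ d →
      ∀ e ∈ G, v ∈ e → ∀ C : Set (Sym2 ℕ), C ⊆ G → M.IsCircuit C → e ∉ C := by
  intro G hG v hvd e heG hve C hCG hC heC
  have hCfin : C.Finite := hC.1.1
  -- degree of v in C is between 1 and d
  have hdegC_pos : 1 ≤ deg C v := by
    have : e ∈ {f ∈ C | v ∈ f} := ⟨heC, hve⟩
    have hfin : {f ∈ C | v ∈ f}.Finite := hCfin.subset (Set.sep_subset _ _)
    exact (Set.ncard_pos hfin).2 ⟨e, ‹_›⟩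
  have hdegC_le : deg C v ≤ d := by
    refine le_trans ?_ hvd
    exact Set.ncard_le_ncard (fun f hf => ⟨hCG hf.1, hf.2⟩)
      (hG.1.subset (Set.sep_subset _ _))
  -- minDeg C ≤ d and minDeg C ≥ 1
  have hvSupp : v ∈ eSupp C := ⟨e, heC, hve⟩
  have hSne : (deg C v) ∈ {k : ℕ | ∃ w ∈ eSupp C, deg C w = k} := ⟨v, hvSupp, rfl⟩
  have hmin_le : minDeg C ≤ d := le_trans (Nat.sInf_le hSne) hdegC_le
  have hmin_mem := Nat.sInf_mem (Set.nonempty_of_mem hSne)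
  obtain ⟨w, hwSupp, hwdeg⟩ := hmin_mem
  have hmin_pos : 1 ≤ minDeg C := by
    obtain ⟨f, hfC, hwf⟩ := hwSupp
    have hfin : {g ∈ C | w ∈ g}.Finite := hCfin.subset (Set.sep_subset _ _)
    have h1 : 0 < deg C w := (Set.ncard_pos hfin).2 ⟨f, hfC, hwf⟩
    show 1 ≤ sInf {k : ℕ | ∃ w ∈ eSupp C, deg C w = k}
    omega
  -- `minDeg C - 1` lies in the dimensionality set, so `d ≤ minDeg C - 1 < minDeg C ≤ d`
  have hmem : (minDeg C - 1) ∈ {d' : ℕ | ∃ C', M.IsCircuit C' ∧ minDeg C' = d' + 1} :=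
    ⟨C, hC, by omega⟩
  have := hd.2 hmem
  omega

/-- (Vertex addition.) If `M` is a nontrivial graph matroid family with
dimensionality `d`, `G` is a graph, and `v` is a vertex of degree at most `d` in `G`, then
every edge of `G` incident to `v` is a bridge (coloop) of `M(G)`, i.e. it lies in no
`M`-circuit contained in `G`.  In particular, adding a vertex of degree at most `d`
to a graph preserves `M`-independence. -/


theorem vertex_addition (M : GraphMatroidFamily) (d : ℕ)
    (hnt : ¬ M.Trivial) (hd : M.IsDimensionality d) :
    (∀ G : Set (Sym2 ℕ), IsGraph G → ∀ v : ℕ, deg G v ≤ d →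
      ∀ e ∈ G, v ∈ e → ∀ C : Set (Sym2 ℕ), C ⊆ G → M.IsCircuit C → e ∉ C) ∧
    (∀ G F : Set (Sym2 ℕ), IsGraph G → IsGraph F → M.Indep G →
      ∀ v : ℕ, v ∉ eSupp G →
        (∀ e ∈ F, v ∈ e ∧ ∀ u ∈ e, u ≠ v → u ∈ eSupp G) →
        F.ncard ≤ d → M.Indep (G ∪ F)) := by
  constructor
  · exact bridge_lemma M d hd
  · intro G F hG hF hGind v hvG hFinc hFcard
    by_contra hdep
    -- take a minimal dependent subset `C` of `G ∪ F`
    set S : Set ℕ := {n : ℕ | ∃ C ⊆ G ∪ F, ¬ M.Indep C ∧ C.ncard = n} with hS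
    have hSne : (G ∪ F).ncard ∈ S := ⟨G ∪ F, le_refl _, hdep, rfl⟩
    obtain ⟨C, hCsub, hCdep, hCcard⟩ := Nat.sInf_mem (Set.nonempty_of_mem hSne)
    have hGFfin : (G ∪ F).Finite := hG.1.union hF.1
    have hCfin : C.Finite := hGFfin.subset hCsub
    -- `C` is an `M`-circuit
    have hCcirc : M.IsCircuit C := by
      refine ⟨⟨hCfin, fun f hf => ?_⟩, hCdep, fun f hf => ?_⟩
      · rcases hCsub hf with h | h
        · exact hG.2 f h
        · exact hF.2 f h
      · by_contra hdep'
        have hmem : (C \ {f}).ncard ∈ S :=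
          ⟨C \ {f}, (Set.diff_subset).trans hCsub, hdep', rfl⟩
        have hlt : (C \ {f}).ncard < C.ncard := by
          refine Set.ncard_lt_ncard ?_ hCfin
          exact ⟨Set.diff_subset, fun hsub => (hsub hf).2 rfl⟩
        have := Nat.sInf_le hmem
        omega
    -- `C` contains an edge of `F`, which is incident to `v`
    have hCnotG : ¬ C ⊆ G := fun h => hCdep (hGind.subset h)
    obtain ⟨f, hfC, hfG⟩ := Set.not_subset.1 hCnotG
    have hfF : f ∈ F := (hCsub hfC).resolve_left hfG
    have hvf : v ∈ f := (hFinc f hfF).1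
    -- the degree of `v` in `G ∪ F` is at most `d`
    have hdeg : deg (G ∪ F) v ≤ d := by
      have hsub : {e ∈ G ∪ F | v ∈ e} ⊆ F := by
        rintro e ⟨he | he, hve⟩
        · exact absurd ⟨e, he, hve⟩ hvG
        · exact he
      exact le_trans (Set.ncard_le_ncard hsub hF.1) hFcard
    have hGF : IsGraph (G ∪ F) := ⟨hGFfin, fun e he => he.elim (hG.2 e) (hF.2 e)⟩
    exact bridge_lemma M d hd (G ∪ F) hGF v hdeg f (Or.inr hfF) hvf C hCsub hCcirc hfC
end

section
/- Let M be a bounded graph matroid family with rank r(M). Then the graph consisting of r(M) + 1 pairwise disjoint (independent) edges is an M-circuit. -/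
/-!
Any two matchings with the same number of edges differ by a permutation of `ℕ`, so whether a
matching is `M`-independent depends only on its number of edges. A matching with `r(M) + 1` edges
lies in some `K_n`, whose rank is at most `r(M)`, so it is dependent. Conversely, if the matchings
with `k < r(M)` edges are independent, take one whose vertices avoid a `K_n` of rank `r(M)` and
augment it by an edge of a basis of that `K_n`: the new edge is disjoint from the matching, so
this gives an independent matching with `k + 1` edges.
-/

lemma IsMatching.insert {A : Set (Sym2 ℕ)} {e : Sym2 ℕ} (hA : IsMatching A)
    (he : ∀ v ∈ e, v ∉ eSupp A) : IsMatching (insert e A) := by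
  rintro a (rfl | ha) b (rfl | hb) hab v hva hvb
  · exact hab rfl
  · exact he v hva ⟨b, hb, hvb⟩
  · exact he v hvb ⟨a, ha, hva⟩
  · exact hA a ha b hb hab v hva hvb

section MatchingOf

variable {ι : Type*} {f : ι ⊕ ι → ℕ}

def matchingOf (f : ι ⊕ ι → ℕ) : Set (Sym2 ℕ) :=
  Set.range fun i => s(f (.inl i), f (.inr i))

lemma matchingOf_comp_sumMap {κ : Type*} (e : κ ≃ ι) :
    matchingOf (f ∘ Sum.map e e) = matchingOf f :=
  e.surjective.range_comp fun i => s(f (.inl i), f (.inr i))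

lemma image_matchingOf (σ : ℕ → ℕ) : Sym2.map σ '' matchingOf f = matchingOf (σ ∘ f) := by
  simp only [matchingOf, ← Set.range_comp]
  rfl

lemma mem_range_of_mem_matchingOf {e : Sym2 ℕ} {v : ℕ} (he : e ∈ matchingOf f) (hv : v ∈ e) :
    v ∈ Set.range f := by
  obtain ⟨i, rfl⟩ := he
  rcases Sym2.mem_iff.1 hv with rfl | rfl
  exacts [⟨_, rfl⟩, ⟨_, rfl⟩]

lemma matchingOf_edges_injective (hf : f.Injective) :
    (fun i => s(f (.inl i), f (.inr i))).Injective := by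
  intro i j hij
  rcases Sym2.eq_iff.1 hij with ⟨h, -⟩ | ⟨h, -⟩
  · exact Sum.inl_injective (hf h)
  · exact absurd (hf h) Sum.inl_ne_inr

lemma isGraph_matchingOf [Finite ι] (hf : f.Injective) : IsGraph (matchingOf f) := by
  refine ⟨Set.finite_range _, ?_⟩
  rintro _ ⟨i, rfl⟩
  rw [Sym2.mk_isDiag_iff]
  exact fun h => Sum.inl_ne_inr (hf h)

lemma isMatching_matchingOf (hf : f.Injective) : IsMatching (matchingOf f) := by
  rintro _ ⟨i, rfl⟩ _ ⟨j, rfl⟩ hne v hvi hvj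
  have hij : i ≠ j := by rintro rfl; exact hne rfl
  simp only [Sym2.mem_iff] at hvi hvj
  rcases hvi with rfl | rfl <;> rcases hvj with h | h <;> have := hf h <;> simp_all

lemma ncard_matchingOf (hf : f.Injective) : (matchingOf f).ncard = Nat.card ι := by
  rw [matchingOf, ← Set.image_univ, Set.ncard_image_of_injective _ (matchingOf_edges_injective hf),
    Set.ncard_univ]

lemma IsMatching.exists_matchingOf_eq {A : Set (Sym2 ℕ)} (hAm : IsMatching A) (hA : IsGraph A) :
    ∃ f : A ⊕ A → ℕ, f.Injective ∧ matchingOf f = A := by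
  refine ⟨Sum.elim (fun e => e.1.out.1) (fun e => e.1.out.2), ?_, ?_⟩
  · have hsame : ∀ a b : A, ∀ v, v ∈ a.1 → v ∈ b.1 → a = b := fun a b v ha hb =>
      Subtype.ext (by_contra fun hne => hAm a.1 a.2 b.1 b.2 hne v ha hb)
    have hout : ∀ a : A, a.1.out.1 ≠ a.1.out.2 := fun a h =>
      hA.2 a.1 a.2 (a.1.out_eq ▸ Sym2.mk_isDiag_iff.2 h)
    rintro (a | a) (b | b) h <;> simp only [Sum.elim_inl, Sum.elim_inr] at h
    · rw [hsame a b _ a.1.out_fst_mem (h ▸ b.1.out_fst_mem)]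
    · obtain rfl := hsame a b _ a.1.out_fst_mem (h ▸ b.1.out_snd_mem)
      exact absurd h (hout a)
    · obtain rfl := hsame a b _ a.1.out_snd_mem (h ▸ b.1.out_fst_mem)
      exact absurd h.symm (hout a)
    · rw [hsame a b _ a.1.out_snd_mem (h ▸ b.1.out_snd_mem)]
  · ext e
    refine ⟨?_, fun he => ⟨⟨e, he⟩, e.out_eq⟩⟩
    rintro ⟨e', rfl⟩
    convert e'.2
    exact e'.1.out_eq

end MatchingOf

lemma IsMatching.exists_perm_image_eq {A B : Set (Sym2 ℕ)} (hAm : IsMatching A) (hA : IsGraph A)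
    (hBm : IsMatching B) (hB : IsGraph B) (hcard : A.ncard = B.ncard) :
    ∃ σ : Equiv.Perm ℕ, Sym2.map σ '' A = B := by
  obtain ⟨f, hf, hfA⟩ := hAm.exists_matchingOf_eq hA
  obtain ⟨g, hg, hgB⟩ := hBm.exists_matchingOf_eq hB
  have := hA.1.to_subtype
  have := hB.1.to_subtype
  obtain ⟨e⟩ : Nonempty (A ≃ B) := by
    rwa [← Finite.card_eq, Nat.card_coe_set_eq, Nat.card_coe_set_eq]
  obtain ⟨σ, hσ⟩ := Equiv.Perm.exists_extending_pair f (g ∘ Sum.map e e) hf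
    (hg.comp (e.injective.sumMap e.injective))
  refine ⟨σ, ?_⟩
  rw [← hfA, ← hgB, image_matchingOf, ← matchingOf_comp_sumMap e]
  exact congrArg matchingOf (funext hσ)

/-- The endpoints of the matching `{n, n+1}, {n+2, n+3}, …, {n+2k-2, n+2k-1}`. -/
def consecutiveEnds (n k : ℕ) : Fin k ⊕ Fin k → ℕ :=
  Sum.elim (fun i => n + 2 * i) (fun i => n + 2 * i + 1)

lemma consecutiveEnds_injective (n k : ℕ) : (consecutiveEnds n k).Injective := by
  rintro (i | i) (j | j) h <;> simp only [consecutiveEnds, Sum.elim_inl, Sum.elim_inr] at h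
  · exact congrArg Sum.inl (Fin.ext (by omega))
  · omega
  · omega
  · exact congrArg Sum.inr (Fin.ext (by omega))

lemma le_consecutiveEnds (n k : ℕ) (x : Fin k ⊕ Fin k) : n ≤ consecutiveEnds n k x := by
  cases x <;> simp only [consecutiveEnds, Sum.elim_inl, Sum.elim_inr] <;> omega

lemma cliqueN_finite (n : ℕ) : (cliqueN n).Finite := by
  refine (((Set.finite_Iio n).prod (Set.finite_Iio n)).image fun p : ℕ × ℕ => s(p.1, p.2)).subset ?_
  rintro e ⟨-, he⟩
  induction e using Sym2.ind with
  | _ x y => exact ⟨(x, y), ⟨he x (Sym2.mem_mk_left x y), he y (Sym2.mem_mk_right x y)⟩, rfl⟩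

lemma IsGraph.exists_subset_cliqueN {E : Set (Sym2 ℕ)} (hE : IsGraph E) :
    ∃ n, E ⊆ cliqueN n := by
  have hsupp : (eSupp E).Finite := by
    refine (hE.1.biUnion fun e _ => e.toFinset.finite_toSet).subset ?_
    rintro v ⟨e, he, hv⟩
    exact Set.mem_biUnion he (Sym2.mem_toFinset.2 hv)
  obtain ⟨b, hb⟩ := hsupp.bddAbove
  exact ⟨b + 1, fun e he => ⟨hE.2 e he, fun v hv => Nat.lt_succ_of_le (hb ⟨e, he, hv⟩)⟩⟩

section Rank

variable {X : Set (Sym2 ℕ)}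

lemma bddAbove_indep_ncard (M₀ : Matroid (Sym2 ℕ)) (hX : X.Finite) :
    BddAbove {n : ℕ | ∃ I ⊆ X, M₀.Indep I ∧ I.ncard = n} := by
  refine ⟨X.ncard, ?_⟩
  rintro _ ⟨I, hIX, -, rfl⟩
  exact Set.ncard_le_ncard hIX hX

lemma Matroid.Indep.ncard_le_mrk {M₀ : Matroid (Sym2 ℕ)} {I : Set (Sym2 ℕ)} (hI : M₀.Indep I)
    (hX : X.Finite) (hIX : I ⊆ X) : I.ncard ≤ mrk M₀ X :=
  le_csSup (bddAbove_indep_ncard M₀ hX) ⟨I, hIX, hI, rfl⟩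

lemma exists_indep_ncard_eq_mrk (M₀ : Matroid (Sym2 ℕ)) (hX : X.Finite) :
    ∃ I ⊆ X, M₀.Indep I ∧ I.ncard = mrk M₀ X :=
  Nat.sSup_mem (s := {n : ℕ | ∃ I ⊆ X, M₀.Indep I ∧ I.ncard = n})
    ⟨0, ∅, Set.empty_subset X, M₀.empty_indep, Set.ncard_empty _⟩ (bddAbove_indep_ncard M₀ hX)

end Rank

namespace GraphMatroidFamily

variable {M : GraphMatroidFamily} {m : ℕ}

lemma Indep.of_isMatching {A B : Set (Sym2 ℕ)} (hI : M.Indep A) (hAm : IsMatching A)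
    (hA : IsGraph A) (hBm : IsMatching B) (hB : IsGraph B) (hcard : A.ncard = B.ncard) :
    M.Indep B := by
  obtain ⟨σ, rfl⟩ := hAm.exists_perm_image_eq hA hBm hB hcard
  exact M.invariant σ A hI

lemma HasRank.ncard_le (hm : M.HasRank m) {I : Set (Sym2 ℕ)} (hI : IsGraph I) (hIi : M.Indep I) :
    I.ncard ≤ m := by
  obtain ⟨n, hn⟩ := hI.exists_subset_cliqueN
  exact (Matroid.Indep.ncard_le_mrk hIi (cliqueN_finite n) hn).trans (hm.1 n)

lemma HasRank.indep_of_isMatching (hm : M.HasRank m) {A : Set (Sym2 ℕ)} (hAm : IsMatching A)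
    (hA : IsGraph A) (hcard : A.ncard ≤ m) : M.Indep A := by
  induction h : A.ncard generalizing A with
  | zero =>
    rw [Set.ncard_eq_zero hA.1] at h
    exact h ▸ M.M.empty_indep
  | succ k ih =>
    obtain ⟨n, hn⟩ := hm.2
    obtain ⟨I, hIX, hI, hIcard⟩ := exists_indep_ncard_eq_mrk M.M (cliqueN_finite n)
    set J := matchingOf (consecutiveEnds n k)
    have hJ : IsGraph J := isGraph_matchingOf (consecutiveEnds_injective n k)
    have hJm : IsMatching J := isMatching_matchingOf (consecutiveEnds_injective n k)
    have hJcard : J.ncard = k :=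
      (ncard_matchingOf (consecutiveEnds_injective n k)).trans (Nat.card_fin k)
    have hJi : M.Indep J := ih hJm hJ (by omega) hJcard
    obtain ⟨f, ⟨hfI, hfJ⟩, hfJi⟩ := Matroid.Indep.augment hJi hI (by
      rw [← hJ.1.cast_ncard_eq, ← ((cliqueN_finite n).subset hIX).cast_ncard_eq, hJcard, hIcard,
        ← rk, hn]
      exact_mod_cast (by omega : k < m))
    obtain ⟨hf, hfn⟩ := hIX hfI
    have hf_disjoint : ∀ v ∈ f, v ∉ eSupp J := by
      rintro v hv ⟨e, he, hve⟩
      obtain ⟨x, rfl⟩ := mem_range_of_mem_matchingOf he hve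
      exact absurd (hfn _ hv) (not_lt.2 (le_consecutiveEnds n k x))
    refine Indep.of_isMatching hfJi (hJm.insert hf_disjoint) ⟨hJ.1.insert f, ?_⟩ hAm hA ?_
    · rintro e (rfl | he)
      exacts [hf, hJ.2 e he]
    · rw [Set.ncard_insert_of_notMem hfJ hJ.1, hJcard, h]

end GraphMatroidFamily

theorem matching_isCircuit_general (M : GraphMatroidFamily) (m : ℕ)
    (hm : M.HasRank m) :
    ∀ E : Set (Sym2 ℕ), IsGraph E → IsMatching E → E.ncard = m + 1 →
      M.IsCircuit E := by
  intro E hE hEm hcard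
  refine ⟨hE, fun hEi => ?_, fun e he => ?_⟩
  · have := hm.ncard_le hE hEi
    omega
  · refine hm.indep_of_isMatching (fun a ha b hb => hEm a ha.1 b hb.1)
      ⟨hE.1.sdiff, fun f hf => hE.2 f hf.1⟩ ?_
    rw [Set.ncard_sdiff_singleton_of_mem he, hcard]
    omega

/-- If `M` is a bounded graph matroid family of rank `r(M) = m`, then
the graph consisting of `m + 1` pairwise disjoint (independent) edges is an `M`-circuit. -/
theorem matching_isCircuit (M : GraphMatroidFamily) (m : ℕ)
    (hb : M.Bounded) (hm : M.HasRank m) :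
    ∀ E : Set (Sym2 ℕ), IsGraph E → IsMatching E → E.ncard = m + 1 →
      M.IsCircuit E :=
  matching_isCircuit_general M m hm
end

section
/- Let M be a bounded graph matroid family. If there is a small M-circuit with minimum degree one, then there exists an integer m ≥ 2 such that the star K_{1,m} is the unique (up to isomorphism) small M-circuit with at most m edges and with minimum degree one. -/
open Set

namespace SUSC

/-- star with center c and leaves L -/
def star2 (c : ℕ) (L : Finset ℕ) : Set (Sym2 ℕ) := (fun x => s(c, x)) '' ↑L

lemma mem_star2 {c : ℕ} {L : Finset ℕ} {e : Sym2 ℕ} :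
    e ∈ star2 c L ↔ ∃ x ∈ L, e = s(c, x) := by
  simp [star2, eq_comm]

lemma sym2_mem_finite (e : Sym2 ℕ) : {v : ℕ | v ∈ e}.Finite := by
  induction e using Sym2.ind with
  | _ a b =>
    apply Set.Finite.subset (Set.toFinite {a, b})
    intro v hv
    simp only [Set.mem_setOf_eq, Sym2.mem_iff] at hv
    rcases hv with rfl | rfl <;> simp

lemma eSupp_finite {E : Set (Sym2 ℕ)} (hE : E.Finite) : (eSupp E).Finite := by
  have : eSupp E = ⋃ e ∈ E, {v : ℕ | v ∈ e} := by
    ext v; simp [eSupp]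
  rw [this]
  exact Set.Finite.biUnion hE (fun e _ => sym2_mem_finite e)

lemma mem_eSupp {E : Set (Sym2 ℕ)} {v : ℕ} : v ∈ eSupp E ↔ ∃ e ∈ E, v ∈ e := Iff.rfl

lemma eSupp_star2_subset (c : ℕ) (L : Finset ℕ) : eSupp (star2 c L) ⊆ insert c (↑L : Set ℕ) := by
  intro v hv
  obtain ⟨e, he, hve⟩ := hv
  rw [mem_star2] at he
  obtain ⟨x, hx, rfl⟩ := he
  rw [Sym2.mem_iff] at hve
  rcases hve with rfl | rfl
  · exact Set.mem_insert _ _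
  · exact Set.mem_insert_of_mem _ (by simpa using hx)

lemma star2_finite (c : ℕ) (L : Finset ℕ) : (star2 c L).Finite :=
  (L.finite_toSet).image _

lemma star2_injOn {c : ℕ} {L : Finset ℕ} (hc : c ∉ L) :
    Set.InjOn (fun x => s(c, x)) ↑L := by
  intro a ha b hb hab
  simpa using (Sym2.congr_right).mp hab

lemma star2_ncard {c : ℕ} {L : Finset ℕ} (hc : c ∉ L) : (star2 c L).ncard = L.card := by
  rw [star2, Set.ncard_image_of_injOn (star2_injOn hc)]
  simp [Set.ncard_coe_finset]

lemma star2_encard {c : ℕ} {L : Finset ℕ} (hc : c ∉ L) : (star2 c L).encard = L.card := by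
  rw [star2, Set.InjOn.encard_image (star2_injOn hc)]
  simp

lemma star2_nondiag {c : ℕ} {L : Finset ℕ} (hc : c ∉ L) :
    ∀ e ∈ star2 c L, ¬ e.IsDiag := by
  intro e he
  rw [mem_star2] at he
  obtain ⟨x, hx, rfl⟩ := he
  rw [Sym2.mk_isDiag_iff]
  rintro rfl
  exact hc hx

lemma star2_isGraph {c : ℕ} {L : Finset ℕ} (hc : c ∉ L) : IsGraph (star2 c L) :=
  ⟨star2_finite c L, star2_nondiag hc⟩

/-- any injection defined on a finite set of naturals extends to a permutation -/
lemma exists_perm_extend (A : Finset ℕ) (f : ℕ → ℕ) (hf : Set.InjOn f ↑A) :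
    ∃ σ : Equiv.Perm ℕ, ∀ a ∈ A, σ a = f a := by
  classical
  set s : Set ℕ := ↑A with hs_def
  have hs : s.Finite := A.finite_toSet
  have ht : (f '' s).Finite := hs.image f
  have h1 : Infinite (↥(sᶜ)) := (hs.infinite_compl).to_subtype
  have h2 : Infinite (↥((f '' s)ᶜ)) := (ht.infinite_compl).to_subtype
  obtain ⟨d1⟩ := nonempty_denumerable (↥(sᶜ))
  obtain ⟨d2⟩ := nonempty_denumerable (↥((f '' s)ᶜ))
  have e₁ : (↥(sᶜ)) ≃ (↥((f '' s)ᶜ)) := (@Denumerable.eqv _ d1).trans (@Denumerable.eqv _ d2).symm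
  obtain ⟨e, he⟩ := (Equiv.Set.compl (Equiv.Set.imageOfInjOn f s hf)).symm e₁
  refine ⟨e, fun a ha => ?_⟩
  have h3 := he ⟨a, ha⟩
  have h4 : ((Equiv.Set.imageOfInjOn f s hf) ⟨a, ha⟩ : ℕ) = f a := rfl
  rw [h4] at h3
  exact h3

end SUSC
namespace SUSC

variable (M : GraphMatroidFamily)

lemma indep_perm_iff (σ : Equiv.Perm ℕ) (I : Set (Sym2 ℕ)) :
    M.Indep (Sym2.map σ '' I) ↔ M.Indep I := by
  constructor
  · intro h
    have h2 := M.invariant σ.symm _ h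
    have : Sym2.map ⇑σ.symm '' (Sym2.map ⇑σ '' I) = I := by
      rw [Set.image_image]
      have : ∀ x : Sym2 ℕ, Sym2.map ⇑σ.symm (Sym2.map ⇑σ x) = x := by
        intro x
        rw [Sym2.map_map]
        have : ⇑σ.symm ∘ ⇑σ = id := by
          funext v; simp
        rw [this, Sym2.map_id, id_eq]
      simp only [this, Set.image_id']
    rwa [this] at h2
  · exact M.invariant σ I

lemma map_eq_of_agree {f g : ℕ → ℕ} {e : Sym2 ℕ} (h : ∀ v ∈ e, f v = g v) :
    Sym2.map f e = Sym2.map g e := by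
  induction e using Sym2.ind with
  | _ a b =>
    rw [Sym2.map_pair_eq, Sym2.map_pair_eq, h a (by simp), h b (by simp)]

lemma indep_image_iff {E : Set (Sym2 ℕ)} (hE : E.Finite) (f : ℕ → ℕ)
    (hf : Set.InjOn f (eSupp E)) :
    M.Indep (Sym2.map f '' E) ↔ M.Indep E := by
  classical
  obtain ⟨σ, hσ⟩ := exists_perm_extend (eSupp_finite hE).toFinset f (by
    intro a ha b hb hab
    simp only [Set.Finite.coe_toFinset] at ha hb
    exact hf ha hb hab)
  have himg : Sym2.map f '' E = Sym2.map ⇑σ '' E := by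
    apply Set.image_congr
    intro e he
    apply map_eq_of_agree
    intro v hv
    have hv' : v ∈ eSupp E := ⟨e, he, hv⟩
    rw [hσ v (by simpa using hv')]
  rw [himg, indep_perm_iff]

lemma image_star2 (f : ℕ → ℕ) (c : ℕ) (L : Finset ℕ) :
    Sym2.map f '' star2 c L = (fun y => s(f c, y)) '' (f '' ↑L) := by
  rw [star2, Set.image_image, Set.image_image]
  apply Set.image_congr
  intro x _
  rw [Sym2.map_pair_eq]

end SUSC
namespace SUSC

variable (M : GraphMatroidFamily)

lemma finset_image_equiv {L L' : Finset ℕ} (e : ↥L ≃ ↥L') (f : ℕ → ℕ)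
    (hf : ∀ (x : ℕ) (h : x ∈ L), f x = (e ⟨x, h⟩ : ℕ)) : f '' ↑L = ↑L' := by
  apply Set.Subset.antisymm
  · rintro y ⟨x, hx, rfl⟩
    simp only [Finset.mem_coe] at hx
    rw [hf x hx]
    exact Finset.coe_mem _
  · intro y hy
    simp only [Finset.mem_coe] at hy
    refine ⟨(e.symm ⟨y, hy⟩ : ℕ), by simpa using (e.symm ⟨y, hy⟩).2, ?_⟩
    rw [hf _ (by simpa using (e.symm ⟨y, hy⟩).2)]
    simp

lemma star2_indep_iff {c c' : ℕ} {L L' : Finset ℕ} (hc : c ∉ L) (hc' : c' ∉ L')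
    (hcard : L.card = L'.card) :
    M.Indep (star2 c L) ↔ M.Indep (star2 c' L') := by
  classical
  have e : ↥L ≃ ↥L' := Finset.equivOfCardEq hcard
  set f : ℕ → ℕ := fun n => if h : n ∈ L then (e ⟨n, h⟩ : ℕ) else if n = c then c' else n
    with hfdef
  have hfc : f c = c' := by simp [hfdef, hc]
  have hfL : ∀ (x : ℕ) (h : x ∈ L), f x = (e ⟨x, h⟩ : ℕ) := by
    intro x h; simp [hfdef, h]
  have hfLmem : ∀ x ∈ L, f x ∈ L' := by
    intro x hx; rw [hfL x hx]; exact (e ⟨x, hx⟩).2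
  have himgL : f '' ↑L = ↑L' := finset_image_equiv e f hfL
  have hinj : Set.InjOn f (eSupp (star2 c L)) := by
    intro a ha b hb hab
    have ha' := eSupp_star2_subset c L ha
    have hb' := eSupp_star2_subset c L hb
    simp only [Set.mem_insert_iff, Finset.mem_coe] at ha' hb'
    rcases ha' with rfl | haL
    · rcases hb' with rfl | hbL
      · rfl
      · rw [hfc, hfL b hbL] at hab
        exact absurd (hab ▸ (e ⟨b, hbL⟩).2) hc'
    · rcases hb' with rfl | hbL
      · rw [hfc, hfL a haL] at hab
        exact absurd (hab.symm ▸ (e ⟨a, haL⟩).2) hc'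
      · rw [hfL a haL, hfL b hbL] at hab
        exact congrArg Subtype.val (e.injective (Subtype.ext hab))
  have himg : Sym2.map f '' star2 c L = star2 c' L' := by
    rw [image_star2, hfc, himgL]; rfl
  rw [← himg, indep_image_iff M (star2_finite c L) f hinj]

end SUSC
namespace SUSC

variable (M : GraphMatroidFamily)

lemma eSupp_union (X Y : Set (Sym2 ℕ)) : eSupp (X ∪ Y) = eSupp X ∪ eSupp Y := by
  ext v
  simp only [eSupp, Set.mem_setOf_eq, Set.mem_union]
  constructor
  · rintro ⟨e, he | he, hv⟩
    · exact Or.inl ⟨e, he, hv⟩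
    · exact Or.inr ⟨e, he, hv⟩
  · rintro (⟨e, he, hv⟩ | ⟨e, he, hv⟩)
    · exact ⟨e, Or.inl he, hv⟩
    · exact ⟨e, Or.inr he, hv⟩

lemma starEdge_indep_iff {c a b c' a' b' : ℕ} {T T' : Finset ℕ}
    (hcT : c ∉ T) (haT : a ∉ T) (hbT : b ∉ T) (hab : a ≠ b) (hac : a ≠ c) (hbc : b ≠ c)
    (hcT' : c' ∉ T') (haT' : a' ∉ T') (hbT' : b' ∉ T') (hab' : a' ≠ b') (hac' : a' ≠ c')
    (hbc' : b' ≠ c') (hcard : T.card = T'.card) :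
    M.Indep (star2 c T ∪ {s(a, b)}) ↔ M.Indep (star2 c' T' ∪ {s(a', b')}) := by
  classical
  have e : ↥T ≃ ↥T' := Finset.equivOfCardEq hcard
  set f : ℕ → ℕ := fun n => if h : n ∈ T then (e ⟨n, h⟩ : ℕ) else
    if n = c then c' else if n = a then a' else if n = b then b' else n with hfdef
  have hfT : ∀ (x : ℕ) (h : x ∈ T), f x = (e ⟨x, h⟩ : ℕ) := by
    intro x h; simp [hfdef, h]
  have hfc : f c = c' := by simp [hfdef, hcT]
  have hfa : f a = a' := by simp [hfdef, haT, hac]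
  have hfb : f b = b' := by simp [hfdef, hbT, hbc, hab.symm]
  have hTmem : ∀ (x : ℕ) (h : x ∈ T), f x ∈ T' := by
    intro x h; rw [hfT x h]; exact (e ⟨x, h⟩).2
  have himgT : f '' ↑T = ↑T' := finset_image_equiv e f hfT
  have hclass : ∀ p ∈ eSupp (star2 c T ∪ {s(a, b)}), p ∈ T ∨ p = c ∨ p = a ∨ p = b := by
    intro p hp
    rw [eSupp_union] at hp
    rcases hp with hp | hp
    · have := eSupp_star2_subset c T hp
      simp only [Set.mem_insert_iff, Finset.mem_coe] at this
      tauto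
    · obtain ⟨e', he', hpe⟩ := hp
      simp only [Set.mem_singleton_iff] at he'
      subst he'
      rw [Sym2.mem_iff] at hpe
      tauto
  have hinj : Set.InjOn f (eSupp (star2 c T ∪ {s(a, b)})) := by
    intro p hp q hq hpq
    rcases hclass p hp with hpT | rfl | rfl | rfl <;>
      rcases hclass q hq with hqT | rfl | rfl | rfl
    · rw [hfT p hpT, hfT q hqT] at hpq
      exact congrArg Subtype.val (e.injective (Subtype.ext hpq))
    · rw [hfT p hpT, hfc] at hpq; exact absurd (hpq ▸ (e ⟨p, hpT⟩).2) hcT'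
    · rw [hfT p hpT, hfa] at hpq; exact absurd (hpq ▸ (e ⟨p, hpT⟩).2) haT'
    · rw [hfT p hpT, hfb] at hpq; exact absurd (hpq ▸ (e ⟨p, hpT⟩).2) hbT'
    · rw [hfc, hfT q hqT] at hpq; exact absurd (hpq.symm ▸ (e ⟨q, hqT⟩).2) hcT'
    · rfl
    · rw [hfc, hfa] at hpq; exact absurd hpq.symm hac'
    · rw [hfc, hfb] at hpq; exact absurd hpq.symm hbc'
    · rw [hfa, hfT q hqT] at hpq; exact absurd (hpq.symm ▸ (e ⟨q, hqT⟩).2) haT'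
    · rw [hfa, hfc] at hpq; exact absurd hpq hac'
    · rfl
    · rw [hfa, hfb] at hpq; exact absurd hpq hab'
    · rw [hfb, hfT q hqT] at hpq; exact absurd (hpq.symm ▸ (e ⟨q, hqT⟩).2) hbT'
    · rw [hfb, hfc] at hpq; exact absurd hpq hbc'
    · rw [hfb, hfa] at hpq; exact absurd hpq.symm hab'
    · rfl
  have hfin : (star2 c T ∪ {s(a, b)}).Finite :=
    (star2_finite c T).union (Set.finite_singleton _)
  have himg : Sym2.map f '' (star2 c T ∪ {s(a, b)}) = star2 c' T' ∪ {s(a', b')} := by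
    rw [Set.image_union, image_star2, hfc, himgT, Set.image_singleton, Sym2.map_pair_eq,
      hfa, hfb]
    rfl
  rw [← himg, indep_image_iff M hfin f hinj]

end SUSC
namespace SUSC

variable (M : GraphMatroidFamily)

lemma map_fix {σ : ℕ → ℕ} {e : Sym2 ℕ} (h : ∀ v ∈ e, σ v = v) : Sym2.map σ e = e := by
  induction e using Sym2.ind with
  | _ a b => rw [Sym2.map_pair_eq, h a (by simp), h b (by simp)]

/-- image of a graph with a degree-one vertex `x` (on edge `xy`) under the
transposition of `x` with a fresh vertex `t`. -/
lemma image_swap {D : Set (Sym2 ℕ)} {x y t : ℕ} (hmem : s(x, y) ∈ D) (hxy : x ≠ y)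
    (hdeg : ∀ e ∈ D, e ≠ s(x, y) → x ∉ e) (ht : t ∉ eSupp D) :
    Sym2.map (Equiv.swap x t) '' D = insert s(t, y) (D \ {s(x, y)}) := by
  have hxs : x ∈ eSupp D := ⟨_, hmem, by simp⟩
  have hys : y ∈ eSupp D := ⟨_, hmem, by simp⟩
  have htx : t ≠ x := fun h => ht (h ▸ hxs)
  have hty : t ≠ y := fun h => ht (h ▸ hys)
  have hD : D = insert s(x, y) (D \ {s(x, y)}) := by
    rw [Set.insert_diff_singleton, Set.insert_eq_of_mem hmem]
  nth_rewrite 1 [hD]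
  rw [Set.image_insert_eq]
  congr 1
  · rw [Sym2.map_pair_eq, Equiv.swap_apply_left,
      Equiv.swap_apply_of_ne_of_ne hxy.symm hty.symm]
  · have : ∀ e ∈ D \ {s(x, y)}, Sym2.map (Equiv.swap x t) e = e := by
      rintro e ⟨heD, hene⟩
      apply map_fix
      intro v hv
      have hvx : v ≠ x := fun h => hdeg e heD (by simpa using hene) (h ▸ hv)
      have hvt : v ≠ t := fun h => ht ⟨e, heD, h ▸ hv⟩
      exact Equiv.swap_apply_of_ne_of_ne hvx hvt
    calc Sym2.map (Equiv.swap x t) '' (D \ {s(x, y)})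
        = (fun e => e) '' (D \ {s(x, y)}) := Set.image_congr this
      _ = D \ {s(x, y)} := Set.image_id _

lemma exists_fresh (V : Set ℕ) (hV : V.Finite) (k : ℕ) :
    ∃ T : Finset ℕ, T.card = k ∧ ∀ x ∈ T, x ∉ V := by
  obtain ⟨N, hN⟩ := hV.bddAbove
  refine ⟨Finset.image (fun i => N + 1 + i) (Finset.range k), ?_, ?_⟩
  · rw [Finset.card_image_of_injective _ (fun a b hab => by omega), Finset.card_range]
  · intro x hx hxV
    simp only [Finset.mem_image, Finset.mem_range] at hx
    obtain ⟨i, _, rfl⟩ := hx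
    have := hN hxV
    omega

lemma exists_min_dep {X : Set (Sym2 ℕ)} (hX : X.Finite) (hdep : ¬ M.Indep X) :
    ∃ D ⊆ X, ¬ M.Indep D ∧ ∀ D' ⊂ D, M.Indep D' := by
  set P := {n : ℕ | ∃ D ⊆ X, ¬ M.Indep D ∧ D.ncard = n} with hP
  have hne : P.Nonempty := ⟨X.ncard, X, Set.Subset.rfl, hdep, rfl⟩
  obtain ⟨D, hDX, hDdep, hDcard⟩ := Nat.sInf_mem hne
  refine ⟨D, hDX, hDdep, fun D' hss => ?_⟩
  by_contra hD'
  have hfin : D.Finite := hX.subset hDX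
  have h1 : D'.ncard < D.ncard := Set.ncard_lt_ncard hss hfin
  have h2 : sInf P ≤ D'.ncard := Nat.sInf_le ⟨D', hss.subset.trans hDX, hD', rfl⟩
  omega

end SUSC
namespace SUSC

variable (M : GraphMatroidFamily)

/-- Key Lemma A: if `D` is dependent, `D` minus the edge `xy` is independent, and `x` is
a degree-one vertex of `D` on the edge `xy`, then the canonical star with `|D|` edges is
dependent. -/
lemma lemA {D : Set (Sym2 ℕ)} (hfin : D.Finite) {x y : ℕ} (hxy : x ≠ y)
    (hmem : s(x, y) ∈ D) (hdep : ¬ M.Indep D) (hind : M.Indep (D \ {s(x, y)}))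
    (hdeg : ∀ e ∈ D, e ≠ s(x, y) → x ∉ e) :
    ¬ M.Indep (star2 0 (Finset.Icc 1 D.ncard)) := by
  intro hstar
  obtain ⟨T, hTcard, hTfresh⟩ :=
    exists_fresh (insert y (eSupp D)) ((eSupp_finite hfin).insert y) D.ncard
  have hyT : y ∉ T := fun h => hTfresh y h (Set.mem_insert _ _)
  have hTsupp : ∀ t ∈ T, t ∉ eSupp D := fun t ht h => hTfresh t ht (Set.mem_insert_of_mem _ h)
  have h0Icc : (0 : ℕ) ∉ Finset.Icc 1 D.ncard := by simp
  have hstar' : M.Indep (star2 y T) := by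
    rw [star2_indep_iff M hyT h0Icc (by simp [hTcard])]
    exact hstar
  have hIfin : (D \ {s(x, y)}).Finite := hfin.subset Set.diff_subset
  have h1 : (D \ {s(x, y)}).encard + 1 = D.encard := Set.encard_diff_singleton_add_one hmem
  have h2 : (star2 y T).encard = D.encard := by
    rw [star2_encard hyT, hTcard, hfin.cast_ncard_eq]
  have hcount1 : (D \ {s(x, y)}).encard < (star2 y T).encard := by
    rw [h2, ← h1, ENat.lt_add_one_iff hIfin.encard_lt_top.ne]
  obtain ⟨e, he, hins⟩ := Matroid.Indep.augment hind hstar' hcount1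
  obtain ⟨heS, -⟩ := he
  rw [mem_star2] at heS
  obtain ⟨t, htT, rfl⟩ := heS
  have himg := image_swap hmem hxy hdeg (hTsupp t htT)
  have hdep' : ¬ M.Indep (insert s(t, y) (D \ {s(x, y)})) := by
    rw [← himg, indep_perm_iff]
    exact hdep
  rw [Sym2.eq_swap] at hins
  exact hdep' hins

/-- extract a degree-one vertex and its unique edge from `minDeg C = 1`. -/
lemma degree_one_data {C : Set (Sym2 ℕ)} (hG : IsGraph C) (hmd : minDeg C = 1) :
    ∃ v u : ℕ, v ≠ u ∧ s(v, u) ∈ C ∧ ∀ e ∈ C, e ≠ s(v, u) → v ∉ e := by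
  have hne : {k : ℕ | ∃ v ∈ eSupp C, deg C v = k}.Nonempty := by
    by_contra hemp
    rw [Set.not_nonempty_iff_eq_empty] at hemp
    rw [minDeg, hemp, Nat.sInf_empty] at hmd
    exact one_ne_zero hmd.symm
  have h1 : 1 ∈ {k : ℕ | ∃ v ∈ eSupp C, deg C v = k} := by
    rw [← hmd]; exact Nat.sInf_mem hne
  obtain ⟨v, hv, hdeg⟩ := h1
  rw [deg, Set.ncard_eq_one] at hdeg
  obtain ⟨e₀, he₀⟩ := hdeg
  have he₀mem : e₀ ∈ C ∧ v ∈ e₀ := by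
    have : e₀ ∈ {e ∈ C | v ∈ e} := he₀ ▸ rfl
    exact this
  obtain ⟨u, rfl⟩ := Sym2.mem_iff_exists.mp he₀mem.2
  have hvu : v ≠ u := by
    intro hh
    exact hG.2 _ he₀mem.1 (by rw [Sym2.mk_isDiag_iff]; exact hh)
  refine ⟨v, u, hvu, he₀mem.1, ?_⟩
  intro e heC hene hvmem
  have : e ∈ {e ∈ C | v ∈ e} := ⟨heC, hvmem⟩
  rw [he₀, Set.mem_singleton_iff] at this
  exact hene this

end SUSC
namespace SUSC

variable (M : GraphMatroidFamily)

lemma sym2_cases (e : Sym2 ℕ) : ∃ a b, e = s(a, b) := by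
  induction e using Sym2.ind with
  | _ a b => exact ⟨a, b, rfl⟩

lemma star2_diff {c z : ℕ} {L : Finset ℕ} (hc : c ∉ L) (hz : z ∈ L) :
    star2 c L \ {s(c, z)} = star2 c (L.erase z) := by
  ext e
  simp only [Set.mem_diff, mem_star2, Set.mem_singleton_iff, Finset.mem_erase]
  constructor
  · rintro ⟨⟨w, hw, rfl⟩, hne⟩
    exact ⟨w, ⟨fun hh => hne (by rw [hh]), hw⟩, rfl⟩
  · rintro ⟨w, ⟨hwz, hw⟩, rfl⟩
    exact ⟨⟨w, hw, rfl⟩, fun hh => hwz (Sym2.congr_right.mp hh)⟩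

lemma cliqueN_finite (n : ℕ) : (cliqueN n).Finite := by
  apply Set.Finite.subset (Finset.range n).sym2.finite_toSet
  intro e he
  rw [Finset.mem_coe, Finset.mem_sym2_iff]
  intro a ha
  rw [Finset.mem_range]
  exact he.2 a ha

lemma le_mrk {X : Set (Sym2 ℕ)} (hX : X.Finite) {I : Set (Sym2 ℕ)} (hI : M.Indep I)
    (hsub : I ⊆ X) : I.ncard ≤ mrk M.M X := by
  apply le_csSup
  · refine ⟨X.ncard, ?_⟩
    rintro n ⟨J, hJX, _, rfl⟩
    exact Set.ncard_le_ncard hJX hX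
  · exact ⟨I, hsub, hI, rfl⟩

lemma mrk_le {X : Set (Sym2 ℕ)} {B : ℕ} (h : ∀ I, I ⊆ X → M.Indep I → I.ncard ≤ B) :
    mrk M.M X ≤ B := by
  apply csSup_le'
  rintro n ⟨I, hIX, hI, rfl⟩
  exact h I hIX hI

lemma single_edge_indep {m₀ : ℕ} (hm₀ : M.HasRank m₀) {C₀ : Set (Sym2 ℕ)}
    (hC : M.IsCircuit C₀) (hcard : C₀.ncard ≤ m₀) : M.Indep {s(0, 1)} := by
  by_contra hdep
  have hempty : ∀ I, M.Indep I → I = ∅ := by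
    intro I hI
    by_contra hne
    obtain ⟨e, he⟩ := Set.nonempty_iff_ne_empty.mpr hne
    have heI : M.Indep {e} := Matroid.Indep.subset hI (by simpa using he)
    have hground : e ∈ M.M.E := Matroid.Indep.subset_ground hI he
    rw [M.ground_eq, Set.mem_setOf_eq] at hground
    obtain ⟨a, b, rfl⟩ := sym2_cases e
    have hab : a ≠ b := by rwa [Sym2.mk_isDiag_iff] at hground
    have h1 : {s(a, b)} = star2 a {b} := by simp [star2]
    have h2 : ({s(0, 1)} : Set (Sym2 ℕ)) = star2 0 {1} := by simp [star2]
    rw [h1, star2_indep_iff M (by simpa using hab) (by simp : (0:ℕ) ∉ ({1} : Finset ℕ))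
      (by simp), ← h2] at heI
    exact hdep heI
  have hzero : ∀ n, M.rk (cliqueN n) = 0 := by
    intro n
    have : mrk M.M (cliqueN n) ≤ 0 := mrk_le M (fun I _ hI => by rw [hempty I hI]; simp)
    simpa [GraphMatroidFamily.rk] using this
  obtain ⟨n, hn⟩ := hm₀.2
  rw [hzero n] at hn
  have hC₀empty : C₀ = ∅ := by
    rw [← Set.ncard_eq_zero hC.1.1]
    omega
  exact hC.2.1 (hC₀empty ▸ M.M.empty_indep)

end SUSC
/-- Let `M` be a bounded graph matroid family (of rank `m₀ = r(M)`;
an `M`-circuit is *small* if it has at most `m₀` edges).  If there is a small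
`M`-circuit with minimum degree one, then there is an integer `m ≥ 2` such that the
star `K_{1,m}` is the unique (up to isomorphism) small `M`-circuit with at most `m`
edges and with minimum degree one. -/
theorem star_unique_small_circuit (M : GraphMatroidFamily) (m₀ : ℕ)
    (hb : M.Bounded) (hm₀ : M.HasRank m₀)
    (h : ∃ C : Set (Sym2 ℕ), M.IsCircuit C ∧ C.ncard ≤ m₀ ∧ minDeg C = 1) :
    ∃ m : ℕ, 2 ≤ m ∧
      (∀ C : Set (Sym2 ℕ), IsStar m C → M.IsCircuit C ∧ C.ncard ≤ m₀) ∧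
      (∀ C : Set (Sym2 ℕ), M.IsCircuit C → C.ncard ≤ m₀ → C.ncard ≤ m →
        minDeg C = 1 → IsStar m C) := by
  classical
  obtain ⟨C₀, hC₀, hC₀card, hC₀md⟩ := h
  have hedge : M.Indep {s(0, 1)} := SUSC.single_edge_indep M hm₀ hC₀ hC₀card
  set mset := {k : ℕ | ¬ M.Indep (SUSC.star2 0 (Finset.Icc 1 k))} with hmsetdef
  -- m₀ + 1 is the size of a dependent star
  have hm₀1 : m₀ + 1 ∈ mset := by
    intro hindep
    have hsub : SUSC.star2 0 (Finset.Icc 1 (m₀ + 1)) ⊆ cliqueN (m₀ + 2) := by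
      intro e he
      rw [SUSC.mem_star2] at he
      obtain ⟨z, hz, rfl⟩ := he
      simp only [Finset.mem_Icc] at hz
      refine ⟨by rw [Sym2.mk_isDiag_iff]; omega, ?_⟩
      intro w hw
      rw [Sym2.mem_iff] at hw
      rcases hw with rfl | rfl <;> · simp only [Set.mem_setOf_eq]; omega
    have hle := SUSC.le_mrk M (SUSC.cliqueN_finite (m₀ + 2)) hindep hsub
    have hcard : (SUSC.star2 0 (Finset.Icc 1 (m₀ + 1))).ncard = m₀ + 1 := by
      rw [SUSC.star2_ncard (by simp)]; simp
    have hbound : mrk M.M (cliqueN (m₀ + 2)) ≤ m₀ := hm₀.1 (m₀ + 2)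
    rw [hcard] at hle
    have := le_trans hle hbound
    omega
  have hmne : mset.Nonempty := ⟨m₀ + 1, hm₀1⟩
  set m := sInf mset with hmdef
  have hmmem : m ∈ mset := Nat.sInf_mem hmne
  have hlt_indep : ∀ k, k < m → M.Indep (SUSC.star2 0 (Finset.Icc 1 k)) := by
    intro k hk
    by_contra hdep
    exact absurd (Nat.sInf_le (show k ∈ mset from hdep)) (by omega)
  -- transfer to arbitrary stars
  have hstar_indep : ∀ (c : ℕ) (L : Finset ℕ), c ∉ L → L.card < m → M.Indep (SUSC.star2 c L) := by
    intro c L hcL hLm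
    rw [SUSC.star2_indep_iff M hcL (by simp : (0:ℕ) ∉ Finset.Icc 1 L.card) (by simp)]
    exact hlt_indep _ hLm
  have hstar_dep : ∀ (c : ℕ) (L : Finset ℕ), c ∉ L → L.card ∈ mset →
      ¬ M.Indep (SUSC.star2 c L) := by
    intro c L hcL hLm hind
    exact hLm ((SUSC.star2_indep_iff M hcL (by simp : (0:ℕ) ∉ Finset.Icc 1 L.card)
      (by simp)).mp hind)
  have hm0 : m ≠ 0 := by
    intro h0
    apply hmmem
    rw [h0]
    have : Finset.Icc 1 0 = (∅ : Finset ℕ) := by simp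
    rw [this]
    have : SUSC.star2 0 (∅ : Finset ℕ) = ∅ := by simp [SUSC.star2]
    rw [this]
    exact M.M.empty_indep
  have hm1 : m ≠ 1 := by
    intro h1
    apply hmmem
    rw [h1]
    have : Finset.Icc 1 1 = ({1} : Finset ℕ) := by simp
    rw [this]
    have : SUSC.star2 0 ({1} : Finset ℕ) = {s(0, 1)} := by simp [SUSC.star2]
    rw [this]
    exact hedge
  have hm2 : 2 ≤ m := by omega
  -- m ≤ m₀ via Lemma A applied to C₀
  obtain ⟨v₀, u₀, hvu₀, hvuC₀, hvdeg₀⟩ := SUSC.degree_one_data hC₀.1 hC₀md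
  have hmle : m ≤ C₀.ncard :=
    Nat.sInf_le (SUSC.lemA M hC₀.1.1 hvu₀ hvuC₀ hC₀.2.1 (hC₀.2.2 _ hvuC₀) hvdeg₀)
  have hmm₀ : m ≤ m₀ := le_trans hmle hC₀card
  refine ⟨m, hm2, ?_, ?_⟩
  · -- every star K_{1,m} is a small circuit
    rintro C ⟨c, L, hcL, hLcard, hCeq⟩
    have hCeq' : C = SUSC.star2 c L := hCeq
    have hCcard : C.ncard = m := by rw [hCeq', SUSC.star2_ncard hcL, hLcard]
    refine ⟨⟨hCeq' ▸ SUSC.star2_isGraph hcL, ?_, ?_⟩, by omega⟩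
    · rw [hCeq']
      exact hstar_dep c L hcL (by rw [hLcard]; exact hmmem)
    · intro e heC
      rw [hCeq'] at heC ⊢
      rw [SUSC.mem_star2] at heC
      obtain ⟨z, hz, rfl⟩ := heC
      rw [SUSC.star2_diff hcL hz]
      apply hstar_indep
      · simp [hcL]
      · rw [Finset.card_erase_of_mem hz, hLcard]
        omega
  · -- uniqueness
    intro C hC hCm₀ hCm hCmd
    obtain ⟨v, u, hvu, hvuC, hvdeg⟩ := SUSC.degree_one_data hC.1 hCmd
    have hCfin : C.Finite := hC.1.1
    have hmC : m ≤ C.ncard :=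
      Nat.sInf_le (SUSC.lemA M hCfin hvu hvuC hC.2.1 (hC.2.2 _ hvuC) hvdeg)
    have hCcard : C.ncard = m := le_antisymm hCm hmC
    have hu_supp : u ∈ eSupp C := ⟨_, hvuC, by simp⟩
    -- claim: every edge of C contains u
    have hall : ∀ e ∈ C, u ∈ e := by
      by_contra hnot
      push_neg at hnot
      obtain ⟨f, hfC, huf⟩ := hnot
      obtain ⟨x, y, rfl⟩ := SUSC.sym2_cases f
      have hxy : x ≠ y := fun hh => hC.1.2 _ hfC (by rw [Sym2.mk_isDiag_iff]; exact hh)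
      have hux : x ≠ u := fun hh => huf (by rw [← hh]; simp)
      have huy : y ≠ u := fun hh => huf (by rw [← hh]; simp)
      have hxsupp : x ∈ eSupp C := ⟨_, hfC, by simp⟩
      have hysupp : y ∈ eSupp C := ⟨_, hfC, by simp⟩
      obtain ⟨W, hWcard, hWfresh⟩ :=
        SUSC.exists_fresh (eSupp C) (SUSC.eSupp_finite hCfin) (m - 1)
      have huW : u ∉ W := fun hh => hWfresh u hh hu_supp
      have hxW : x ∉ W := fun hh => hWfresh x hh hxsupp
      have hyW : y ∉ W := fun hh => hWfresh y hh hysupp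
      have hSind : M.Indep (SUSC.star2 u W) := hstar_indep u W huW (by omega)
      have hfS : s(x, y) ∉ SUSC.star2 u W := by
        rw [SUSC.mem_star2]
        rintro ⟨z, hz, heq⟩
        exact huf (by rw [heq]; simp)
      -- the star plus the edge f is dependent
      have hJdep : ¬ M.Indep (SUSC.star2 u W ∪ {s(x, y)}) := by
        intro hJ
        have hI : M.Indep (C \ {s(v, u)}) := hC.2.2 _ hvuC
        have hIe : (C \ {s(v, u)}).encard + 1 = C.encard :=
          Set.encard_diff_singleton_add_one hvuC
        have hIfin : (C \ {s(v, u)}).Finite := hCfin.subset Set.diff_subset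
        have hJe : (SUSC.star2 u W ∪ {s(x, y)}).encard = (m : ℕ∞) := by
          rw [Set.union_singleton, Set.encard_insert_of_notMem hfS,
            SUSC.star2_encard huW, hWcard]
          have harith : m - 1 + 1 = m := by omega
          exact_mod_cast harith
        have hlt : (C \ {s(v, u)}).encard < (SUSC.star2 u W ∪ {s(x, y)}).encard := by
          rw [hJe]
          have hCe : C.encard = (C.ncard : ℕ∞) := hCfin.cast_ncard_eq.symm
          have h1 : (C \ {s(v, u)}).encard < C.encard := by
            rw [← hIe, ENat.lt_add_one_iff hIfin.encard_lt_top.ne]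
          apply lt_of_lt_of_le h1
          rw [hCe, Nat.cast_le, hCcard]
        obtain ⟨e, he, hins⟩ := Matroid.Indep.augment hI hJ hlt
        obtain ⟨heJ, heI⟩ := he
        rcases heJ with heS | hef
        · rw [SUSC.mem_star2] at heS
          obtain ⟨w, hwW, rfl⟩ := heS
          have hwfresh : w ∉ eSupp C := hWfresh w hwW
          have himg := SUSC.image_swap hvuC hvu hvdeg hwfresh
          have hdep' : ¬ M.Indep (insert s(w, u) (C \ {s(v, u)})) := by
            rw [← himg, SUSC.indep_perm_iff]
            exact hC.2.1
          rw [Sym2.eq_swap] at hins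
          exact hdep' hins
        · rw [Set.mem_singleton_iff] at hef
          apply heI
          rw [hef]
          refine ⟨hfC, ?_⟩
          intro hh
          rw [Set.mem_singleton_iff] at hh
          exact huf (by rw [hh]; simp)
      -- transfer: any star of size m-1 plus a disjoint edge is dependent
      obtain ⟨n₀, hn₀⟩ := hm₀.2
      obtain ⟨T, hTcard, hTfresh⟩ :=
        SUSC.exists_fresh {x : ℕ | x ≤ n₀} (Set.finite_Iic n₀) (m - 1)
      have hTbig : ∀ t ∈ T, n₀ < t := by
        intro t ht
        have := hTfresh t ht
        simp only [Set.mem_setOf_eq] at this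
        omega
      have hn₀T : n₀ ∉ T := fun hh => lt_irrefl n₀ (hTbig n₀ hh)
      have hup : mrk M.M (cliqueN n₀) ≤ m - 1 := by
        apply SUSC.mrk_le
        intro I hIsub hIind
        by_contra hbig
        push_neg at hbig
        have hIfin : I.Finite := (SUSC.cliqueN_finite n₀).subset hIsub
        have hBind : M.Indep (SUSC.star2 n₀ T) := hstar_indep n₀ T hn₀T (by omega)
        have hlt : (SUSC.star2 n₀ T).encard < I.encard := by
          rw [SUSC.star2_encard hn₀T, hTcard, ← hIfin.cast_ncard_eq, Nat.cast_lt]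
          omega
        obtain ⟨e, he, hins⟩ := Matroid.Indep.augment hBind hIind hlt
        obtain ⟨heI, heB⟩ := he
        have heCl := hIsub heI
        obtain ⟨a, b, rfl⟩ := SUSC.sym2_cases e
        have hab : a ≠ b := by
          have := heCl.1
          rwa [Sym2.mk_isDiag_iff] at this
        have han : a < n₀ := heCl.2 a (by simp)
        have hbn : b < n₀ := heCl.2 b (by simp)
        have haT : a ∉ T := fun hh => by have := hTbig a hh; omega
        have hbT : b ∉ T := fun hh => by have := hTbig b hh; omega
        have hdep2 : ¬ M.Indep (SUSC.star2 n₀ T ∪ {s(a, b)}) := by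
          rw [← SUSC.starEdge_indep_iff M huW hxW hyW hxy hux huy
            hn₀T haT hbT hab (by omega) (by omega) (by rw [hWcard, hTcard])]
          exact hJdep
        rw [Set.union_singleton] at hdep2
        exact hdep2 hins
      rw [show mrk M.M (cliqueN n₀) = M.rk (cliqueN n₀) from rfl, hn₀] at hup
      omega
    -- conclude: C is a star with center u
    have hLinj : Set.InjOn (fun z => s(u, z)) {z : ℕ | s(u, z) ∈ C} := by
      intro a _ b _ hab
      exact Sym2.congr_right.mp hab
    have hLfin : {z : ℕ | s(u, z) ∈ C}.Finite := by
      apply Set.Finite.of_finite_image (hCfin.subset ?_) hLinj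
      rintro e ⟨z, hz, rfl⟩
      exact hz
    have hCimg : C = (fun z => s(u, z)) '' {z : ℕ | s(u, z) ∈ C} := by
      apply Set.Subset.antisymm
      · intro e heC
        obtain ⟨z, rfl⟩ := Sym2.mem_iff_exists.mp (hall e heC)
        exact ⟨z, heC, rfl⟩
      · rintro e ⟨z, hz, rfl⟩
        exact hz
    refine ⟨u, hLfin.toFinset, ?_, ?_, ?_⟩
    · rw [Set.Finite.mem_toFinset]
      intro hh
      exact hC.1.2 _ hh (by rw [Sym2.mk_isDiag_iff])
    · have hsetcard : {z : ℕ | s(u, z) ∈ C}.ncard = m := by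
        have h5 := hCcard
        rw [hCimg, Set.ncard_image_of_injOn hLinj] at h5
        exact h5
      rw [← hsetcard]
      exact (Set.ncard_eq_toFinset_card _ hLfin).symm
    · rw [Set.Finite.coe_toFinset]
      exact hCimg
end
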